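/- Let (g, [·,·,·], α, β) be a 3-BiHom-Lie superalgebra with α, β surjective (bijective), (M, ρ, α_M, β_M) a representation, and f : g → M an even linear map with f∘α = α_M∘f and f∘β = β_M∘f. Then the trilinear map θ_f(x,y,z) = f([x,y,z]) - ρ(x,y)f(z) + (-1)^{|y||z|} ρ(x, α^{-1}β(z)) f(αβ^{-1}(y)) - (-1)^{(|y|+|z|)|x|} ρ(y, α^{-1}β(z)) f(αβ^{-1}(x)) is a 3-cocycle associated with ρ. -/

import Mathlib

structure Is3BiHomLieSuper (𝕜 : Type*) [Field 𝕜] {V : Type*} [AddCommGroup V] [Module 𝕜 V]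
    (G : ZMod 2 → Submodule 𝕜 V) (br : V → V → V → V) (α β : V →ₗ[𝕜] V) : Prop where
  sup_top : G 0 ⊔ G 1 = ⊤
  inf_bot : G 0 ⊓ G 1 = ⊥
  add₁ : ∀ x x' y z : V, br (x + x') y z = br x y z + br x' y z
  smul₁ : ∀ (c : 𝕜) (x y z : V), br (c • x) y z = c • br x y z
  add₂ : ∀ x y y' z : V, br x (y + y') z = br x y z + br x y' z
  smul₂ : ∀ (c : 𝕜) (x y z : V), br x (c • y) z = c • br x y z
  add₃ : ∀ x y z z' : V, br x y (z + z') = br x y z + br x y z'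
  smul₃ : ∀ (c : 𝕜) (x y z : V), br x y (c • z) = c • br x y z
  α_even : ∀ i, ∀ x ∈ G i, α x ∈ G i
  β_even : ∀ i, ∀ x ∈ G i, β x ∈ G i
  br_grade : ∀ i j k, ∀ x ∈ G i, ∀ y ∈ G j, ∀ z ∈ G k, br x y z ∈ G (i + j + k)
  comm : ∀ x, α (β x) = β (α x)
  mult_α : ∀ x y z, α (br x y z) = br (α x) (α y) (α z)
  mult_β : ∀ x y z, β (br x y z) = br (β x) (β y) (β z)
  skew₁ : ∀ (i j : ZMod 2), ∀ x ∈ G i, ∀ y ∈ G j, ∀ z : V,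
    br (β x) (β y) (α z) = -((-1 : 𝕜) ^ (i.val * j.val)) • br (β y) (β x) (α z)
  skew₂ : ∀ (j k : ZMod 2), ∀ y ∈ G j, ∀ z ∈ G k, ∀ x : V,
    br (β x) (β y) (α z) = -((-1 : 𝕜) ^ (j.val * k.val)) • br (β x) (β z) (α y)
  jacobi : ∀ (ix iy iz iu iv : ZMod 2), ∀ x ∈ G ix, ∀ y ∈ G iy, ∀ z ∈ G iz, ∀ u ∈ G iu, ∀ v ∈ G iv,
    br (β (β x)) (β (β y)) (br (β z) (β u) (α v)) =
      (-1 : 𝕜) ^ ((iu.val + iv.val) * (ix.val + iy.val + iz.val)) •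
        br (β (β u)) (β (β v)) (br (β x) (β y) (α z)) -
      (-1 : 𝕜) ^ ((iz.val + iv.val) * (ix.val + iy.val) + iu.val * iv.val) •
        br (β (β z)) (β (β v)) (br (β x) (β y) (α u)) +
      (-1 : 𝕜) ^ ((iz.val + iu.val) * (ix.val + iy.val)) •
        br (β (β z)) (β (β u)) (br (β x) (β y) (α v))

structure IsRep3 (𝕜 : Type*) [Field 𝕜] {V M : Type*} [AddCommGroup V] [Module 𝕜 V]
    [AddCommGroup M] [Module 𝕜 M]
    (G : ZMod 2 → Submodule 𝕜 V) (br : V → V → V → V) (α β : V →ₗ[𝕜] V)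
    (GM : ZMod 2 → Submodule 𝕜 M) (ρ : V → V → M →ₗ[𝕜] M) (αM βM : M →ₗ[𝕜] M) : Prop where
  supM : GM 0 ⊔ GM 1 = ⊤
  infM : GM 0 ⊓ GM 1 = ⊥
  commM : ∀ m, αM (βM m) = βM (αM m)
  ρadd₁ : ∀ x x' y : V, ρ (x + x') y = ρ x y + ρ x' y
  ρsmul₁ : ∀ (c : 𝕜) (x y : V), ρ (c • x) y = c • ρ x y
  ρadd₂ : ∀ x y y' : V, ρ x (y + y') = ρ x y + ρ x y'
  ρsmul₂ : ∀ (c : 𝕜) (x y : V), ρ x (c • y) = c • ρ x y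
  ρskew : ∀ (i j : ZMod 2), ∀ x ∈ G i, ∀ y ∈ G j, ρ x y = -((-1 : 𝕜) ^ (i.val * j.val)) • ρ y x
  ρeven : ∀ (i j k : ZMod 2), ∀ x ∈ G i, ∀ y ∈ G j, ∀ m ∈ GM k, ρ x y m ∈ GM (i + j + k)
  αM_even : ∀ k, ∀ m ∈ GM k, αM m ∈ GM k
  βM_even : ∀ k, ∀ m ∈ GM k, βM m ∈ GM k
  rep₁ : ∀ u v, ρ (α u) (α v) ∘ₗ αM = αM ∘ₗ ρ u v
  rep₂ : ∀ u v, ρ (β u) (β v) ∘ₗ βM = βM ∘ₗ ρ u v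
  rep₃ : ∀ (iu iv ix iy : ZMod 2), ∀ u ∈ G iu, ∀ v ∈ G iv, ∀ x ∈ G ix, ∀ y ∈ G iy,
    ρ (α (β u)) (α (β v)) ∘ₗ ρ x y =
      (-1 : 𝕜) ^ ((iu.val + iv.val) * (ix.val + iy.val)) • (ρ (β x) (β y) ∘ₗ ρ (α u) (α v)) +
      ρ (br (β u) (β v) x) (β y) ∘ₗ βM +
      (-1 : 𝕜) ^ (ix.val * (iu.val + iv.val)) • (ρ (β x) (br (β u) (β v) y) ∘ₗ βM)
  rep₄ : ∀ (iu iv ix iy : ZMod 2), ∀ u ∈ G iu, ∀ v ∈ G iv, ∀ x ∈ G ix, ∀ y ∈ G iy,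
    ρ (br (β u) (β v) x) (β y) ∘ₗ βM =
      (-1 : 𝕜) ^ (iu.val * (ix.val + iv.val)) • (ρ (α (β v)) (β x) ∘ₗ ρ (α u) y) +
      (-1 : 𝕜) ^ (ix.val * (iu.val + iv.val)) • (ρ (β x) (α (β u)) ∘ₗ ρ (α v) y) +
      ρ (α (β u)) (α (β v)) ∘ₗ ρ x y

structure Is3Cocycle (𝕜 : Type*) [Field 𝕜] {V M : Type*} [AddCommGroup V] [Module 𝕜 V]
    [AddCommGroup M] [Module 𝕜 M]
    (G : ZMod 2 → Submodule 𝕜 V) (br : V → V → V → V) (α β : V →ₗ[𝕜] V)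
    (GM : ZMod 2 → Submodule 𝕜 M) (ρ : V → V → M →ₗ[𝕜] M) (αM βM : M →ₗ[𝕜] M)
    (θ : V → V → V → M) : Prop where
  θadd₁ : ∀ x x' y z : V, θ (x + x') y z = θ x y z + θ x' y z
  θsmul₁ : ∀ (c : 𝕜) (x y z : V), θ (c • x) y z = c • θ x y z
  θadd₂ : ∀ x y y' z : V, θ x (y + y') z = θ x y z + θ x y' z
  θsmul₂ : ∀ (c : 𝕜) (x y z : V), θ x (c • y) z = c • θ x y z
  θadd₃ : ∀ x y z z' : V, θ x y (z + z') = θ x y z + θ x y z'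
  θsmul₃ : ∀ (c : 𝕜) (x y z : V), θ x y (c • z) = c • θ x y z
  θeven : ∀ (i j k : ZMod 2), ∀ x ∈ G i, ∀ y ∈ G j, ∀ z ∈ G k, θ x y z ∈ GM (i + j + k)
  equiv_α : ∀ x y z, αM (θ x y z) = θ (α x) (α y) (α z)
  equiv_β : ∀ x y z, βM (θ x y z) = θ (β x) (β y) (β z)
  cskew₁ : ∀ (i j : ZMod 2), ∀ x ∈ G i, ∀ y ∈ G j, ∀ z : V,
    θ (β x) (β y) (α z) = -((-1 : 𝕜) ^ (i.val * j.val)) • θ (β y) (β x) (α z)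
  cskew₂ : ∀ (j k : ZMod 2), ∀ y ∈ G j, ∀ z ∈ G k, ∀ x : V,
    θ (β x) (β y) (α z) = -((-1 : 𝕜) ^ (j.val * k.val)) • θ (β x) (β z) (α y)
  cocycle : ∀ (i1 i2 i3 i4 i5 : ZMod 2), ∀ x1 ∈ G i1, ∀ x2 ∈ G i2, ∀ x3 ∈ G i3,
      ∀ x4 ∈ G i4, ∀ x5 ∈ G i5,
    θ (β (β x1)) (β (β x2)) (br (β x3) (β x4) (α x5)) +
      ρ (β (β x1)) (β (β x2)) (θ (β x3) (β x4) (α x5)) =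
    (-1 : 𝕜) ^ ((i4.val + i5.val) * (i1.val + i2.val + i3.val)) •
      (θ (β (β x4)) (β (β x5)) (br (β x1) (β x2) (α x3)) +
        ρ (β (β x4)) (β (β x5)) (θ (β x1) (β x2) (α x3))) -
    (-1 : 𝕜) ^ ((i3.val + i5.val) * (i1.val + i2.val) + i4.val * i5.val) •
      (θ (β (β x3)) (β (β x5)) (br (β x1) (β x2) (α x4)) +
        ρ (β (β x3)) (β (β x5)) (θ (β x1) (β x2) (α x4))) +
    (-1 : 𝕜) ^ ((i3.val + i4.val) * (i1.val + i2.val)) •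
      (θ (β (β x3)) (β (β x4)) (br (β x1) (β x2) (α x5)) +
        ρ (β (β x3)) (β (β x4)) (θ (β x1) (β x2) (α x5)))

/-!
Up to sign, `θ_f` is the coboundary of the 1-cochain `f`, and the cocycle identity says that a
coboundary is closed. Substituting `x ↦ β x`, `y ↦ β y`, `z ↦ α z` removes the twists `α⁻¹β`,
`αβ⁻¹` from `θ_f`. In each of the four summands
`θ(ββa, ββb, [βc, βd, αe]) + ρ(ββa, ββb) θ(βc, βd, αe)` of the cocycle identity the two terms
`± ρ(ββa, ββb) f([βc, βd, αe])` then cancel; the terms `f([ββa, ββb, [βc, βd, αe]])` cancel by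
the fundamental identity; and the rest, sorted by the vector `f(α xᵢ)` the operators act on, is
the third representation axiom for `i = 3, 4, 5` and the fourth one for `i = 1, 2`, combined with
the super skew-symmetry of `ρ`. The other conditions are checked on homogeneous elements and
extended by additivity; `α⁻¹` and `β⁻¹` preserve the grading because `g = g₀ ⊕ g₁`.
-/

open Function

theorem ZMod.two_cases : ∀ i : ZMod 2, i = 0 ∨ i = 1 := by decide

section Grading

variable {𝕜 V : Type*} [Field 𝕜] [AddCommGroup V] [Module 𝕜 V] {G : ZMod 2 → Submodule 𝕜 V}

theorem eq_of_eq_on_homogeneous {X : Type*} [Add X] (hG : G 0 ⊔ G 1 = ⊤) {φ ψ : V → X}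
    (hφ : ∀ a b, φ (a + b) = φ a + φ b) (hψ : ∀ a b, ψ (a + b) = ψ a + ψ b)
    (h : ∀ i, ∀ x ∈ G i, φ x = ψ x) (x : V) : φ x = ψ x := by
  obtain ⟨x₀, h₀, x₁, h₁, rfl⟩ := Submodule.mem_sup.mp (hG ▸ Submodule.mem_top (x := x))
  rw [hφ, hψ, h 0 x₀ h₀, h 1 x₁ h₁]

theorem eq_of_eq_on_homogeneous₃ {X : Type*} [Add X] (hG : G 0 ⊔ G 1 = ⊤)
    {φ ψ : V → V → V → X}
    (hφ₁ : ∀ x x' y z, φ (x + x') y z = φ x y z + φ x' y z)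
    (hφ₂ : ∀ x y y' z, φ x (y + y') z = φ x y z + φ x y' z)
    (hφ₃ : ∀ x y z z', φ x y (z + z') = φ x y z + φ x y z')
    (hψ₁ : ∀ x x' y z, ψ (x + x') y z = ψ x y z + ψ x' y z)
    (hψ₂ : ∀ x y y' z, ψ x (y + y') z = ψ x y z + ψ x y' z)
    (hψ₃ : ∀ x y z z', ψ x y (z + z') = ψ x y z + ψ x y z')
    (h : ∀ i j k, ∀ x ∈ G i, ∀ y ∈ G j, ∀ z ∈ G k, φ x y z = ψ x y z) (x y z : V) :
    φ x y z = ψ x y z := by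
  refine eq_of_eq_on_homogeneous hG (hφ₃ x y) (hψ₃ x y) (fun k z hz ↦ ?_) z
  refine eq_of_eq_on_homogeneous (φ := (φ x · z)) (ψ := (ψ x · z)) hG (hφ₂ x · · z)
    (hψ₂ x · · z) (fun j y hy ↦ ?_) y
  exact eq_of_eq_on_homogeneous (φ := (φ · y z)) (ψ := (ψ · y z)) hG (hφ₁ · · y z)
    (hψ₁ · · y z) (fun i x hx ↦ h i j k x hx y hy z hz) x

theorem eq_zero_of_mem_of_mem (hG : G 0 ⊓ G 1 = ⊥) {x : V} (h₀ : x ∈ G 0) (h₁ : x ∈ G 1) :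
    x = 0 :=
  (Submodule.mem_bot 𝕜).mp (hG ▸ Submodule.mem_inf.mpr ⟨h₀, h₁⟩)

theorem mem_of_map_mem (hG : G 0 ⊔ G 1 = ⊤) (hG' : G 0 ⊓ G 1 = ⊥) {γ : V →ₗ[𝕜] V}
    (hγ : Injective γ) (hγG : ∀ i, ∀ x ∈ G i, γ x ∈ G i) {i : ZMod 2} {x : V}
    (hx : γ x ∈ G i) : x ∈ G i := by
  obtain ⟨x₀, h₀, x₁, h₁, rfl⟩ := Submodule.mem_sup.mp (hG ▸ Submodule.mem_top (x := x))
  have hγ₀ := hγG 0 x₀ h₀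
  have hγ₁ := hγG 1 x₁ h₁
  rw [map_add] at hx
  rcases ZMod.two_cases i with rfl | rfl
  · have : γ x₁ = 0 := eq_zero_of_mem_of_mem hG' (by simpa using sub_mem hx hγ₀) hγ₁
    rwa [hγ.eq_iff' (map_zero γ) |>.mp this, add_zero]
  · have : γ x₀ = 0 := eq_zero_of_mem_of_mem hG' hγ₀ (by simpa using sub_mem hx hγ₁)
    rwa [hγ.eq_iff' (map_zero γ) |>.mp this, zero_add]

end Grading

section BiHom

variable {𝕜 V M : Type*} [Field 𝕜] [AddCommGroup V] [Module 𝕜 V] [AddCommGroup M] [Module 𝕜 M]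
  {G : ZMod 2 → Submodule 𝕜 V} {br : V → V → V → V} {α β αi βi : V →ₗ[𝕜] V}
  {GM : ZMod 2 → Submodule 𝕜 M} {ρ : V → V → M →ₗ[𝕜] M} {αM βM : M →ₗ[𝕜] M}
  {f : V →ₗ[𝕜] M} {Θ : V → V → V → M}
  {i j k i₁ i₂ i₃ i₄ i₅ : ZMod 2} {x y z x₁ x₂ x₃ x₄ x₅ : V}

namespace Is3BiHomLieSuper

theorem inv_mem (halg : Is3BiHomLieSuper 𝕜 G br α β) {γ γi : V →ₗ[𝕜] V}
    (hγ : ∀ x, γi (γ x) = x) (hγi : ∀ x, γ (γi x) = x) (hγG : ∀ i, ∀ x ∈ G i, γ x ∈ G i)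
    {i : ZMod 2} {x : V} (hx : x ∈ G i) : γi x ∈ G i :=
  mem_of_map_mem halg.sup_top halg.inf_bot (LeftInverse.injective hγ) hγG (by rwa [hγi])

theorem inv_β_br (halg : Is3BiHomLieSuper 𝕜 G br α β) (hαi₁ : ∀ x, α (αi x) = x)
    (hαi₂ : ∀ x, αi (α x) = x) (c d e : V) :
    αi (β (br (β c) (β d) (α e))) = br (β (β (αi c))) (β (β (αi d))) (β e) := by
  apply LeftInverse.injective hαi₂
  simp only [hαi₁, halg.mult_α, halg.mult_β, halg.comm]

end Is3BiHomLieSuper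

namespace IsRep3

theorem rep₃_twisted (hrep : IsRep3 𝕜 G br α β GM ρ αM βM) (halg : Is3BiHomLieSuper 𝕜 G br α β)
    (hαi₁ : ∀ x, α (αi x) = x) (hαi₂ : ∀ x, αi (α x) = x)
    (hx₁ : x₁ ∈ G i₁) (hx₂ : x₂ ∈ G i₂) (hx₃ : x₃ ∈ G i₃) (hx₄ : x₄ ∈ G i₄) (m : M) :
    ρ (β (β x₁)) (β (β x₂)) (ρ (β x₃) (β x₄) m) =
      (-1 : 𝕜) ^ ((i₁.val + i₂.val) * (i₃.val + i₄.val)) •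
        ρ (β (β x₃)) (β (β x₄)) (ρ (β x₁) (β x₂) m) -
      (-1 : 𝕜) ^ (i₄.val * (i₁.val + i₂.val + i₃.val)) •
        ρ (β (β x₄)) (br (β (β (αi x₁))) (β (β (αi x₂))) (β x₃)) (βM m) +
      (-1 : 𝕜) ^ (i₃.val * (i₁.val + i₂.val)) •
        ρ (β (β x₃)) (br (β (β (αi x₁))) (β (β (αi x₂))) (β x₄)) (βM m) := by
  have hu₁ := halg.β_even _ _ (halg.inv_mem hαi₂ hαi₁ halg.α_even hx₁)
  have hu₂ := halg.β_even _ _ (halg.inv_mem hαi₂ hαi₁ halg.α_even hx₂)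
  have hβ₃ := halg.β_even _ _ hx₃
  have hβ₄ := halg.β_even _ _ hx₄
  have h := LinearMap.congr_fun (hrep.rep₃ _ _ _ _ _ hu₁ _ hu₂ _ hβ₃ _ hβ₄) m
  have hskew := LinearMap.congr_fun (hrep.ρskew _ _ _
    (halg.br_grade _ _ _ _ (halg.β_even _ _ hu₁) _ (halg.β_even _ _ hu₂) _ hβ₃) _
    (halg.β_even _ _ hβ₄)) (βM m)
  simp only [LinearMap.comp_apply, LinearMap.add_apply, LinearMap.smul_apply, halg.comm,
    hαi₁] at h hskew
  linear_combination (norm := match_scalars <;>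
    rcases ZMod.two_cases i₁ with rfl | rfl <;> rcases ZMod.two_cases i₂ with rfl | rfl <;>
    rcases ZMod.two_cases i₃ with rfl | rfl <;> rcases ZMod.two_cases i₄ with rfl | rfl <;>
    norm_num [ZMod.val_one, ZMod.val_ofNat]) h + hskew

theorem rep₄_twisted (hrep : IsRep3 𝕜 G br α β GM ρ αM βM) (halg : Is3BiHomLieSuper 𝕜 G br α β)
    (hαi₁ : ∀ x, α (αi x) = x) (hαi₂ : ∀ x, αi (α x) = x)
    (hx₁ : x₁ ∈ G i₁) (hx₂ : x₂ ∈ G i₂) (hx₃ : x₃ ∈ G i₃) (hx₄ : x₄ ∈ G i₄) (m : M) :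
    ρ (β (β x₁)) (br (β (β (αi x₂))) (β (β (αi x₃))) (β x₄)) (βM m) =
      (-1 : 𝕜) ^ ((i₁.val + i₂.val) * (i₃.val + i₄.val)) •
        ρ (β (β x₃)) (β (β x₄)) (ρ (β x₁) (β x₂) m) -
      (-1 : 𝕜) ^ (i₁.val * (i₂.val + i₄.val) + i₃.val * i₄.val) •
        ρ (β (β x₂)) (β (β x₄)) (ρ (β x₁) (β x₃) m) +
      (-1 : 𝕜) ^ (i₁.val * (i₂.val + i₃.val)) •
        ρ (β (β x₂)) (β (β x₃)) (ρ (β x₁) (β x₄) m) := by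
  have hβ₁ := halg.β_even _ _ hx₁
  have hβ₂ := halg.β_even _ _ hx₂
  have hβ₃ := halg.β_even _ _ hx₃
  have hβ₄ := halg.β_even _ _ hx₄
  have hu₂ := halg.β_even _ _ (halg.inv_mem hαi₂ hαi₁ halg.α_even hx₂)
  have hu₃ := halg.β_even _ _ (halg.inv_mem hαi₂ hαi₁ halg.α_even hx₃)
  have h := LinearMap.congr_fun (hrep.rep₄ _ _ _ _ _ hu₂ _ hu₃ _ hβ₄ _ hβ₁) m
  have s₀ := LinearMap.congr_fun (hrep.ρskew _ _ _
    (halg.br_grade _ _ _ _ (halg.β_even _ _ hu₂) _ (halg.β_even _ _ hu₃) _ hβ₄) _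
    (halg.β_even _ _ hβ₁)) (βM m)
  have s₁ := congrArg (ρ (β (β x₃)) (β (β x₄)))
    (LinearMap.congr_fun (hrep.ρskew _ _ _ hβ₂ _ hβ₁) m)
  have s₂ := LinearMap.congr_fun (hrep.ρskew _ _ _ (halg.β_even _ _ hβ₄) _ (halg.β_even _ _ hβ₂))
    (ρ (β x₃) (β x₁) m)
  have s₃ := congrArg (ρ (β (β x₂)) (β (β x₄)))
    (LinearMap.congr_fun (hrep.ρskew _ _ _ hβ₃ _ hβ₁) m)
  have s₄ := congrArg (ρ (β (β x₂)) (β (β x₃)))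
    (LinearMap.congr_fun (hrep.ρskew _ _ _ hβ₄ _ hβ₁) m)
  simp only [LinearMap.comp_apply, LinearMap.add_apply, LinearMap.smul_apply, map_smul,
    halg.comm, hαi₁] at h s₀ s₁ s₂ s₃ s₄
  linear_combination (norm := match_scalars <;>
    rcases ZMod.two_cases i₁ with rfl | rfl <;> rcases ZMod.two_cases i₂ with rfl | rfl <;>
    rcases ZMod.two_cases i₃ with rfl | rfl <;> rcases ZMod.two_cases i₄ with rfl | rfl <;>
    norm_num [ZMod.val_one, ZMod.val_ofNat])
    (-(-1 : 𝕜) ^ (i₁.val * (i₂.val + i₃.val + i₄.val))) • h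
    + (-1 : 𝕜) ^ (i₁.val * (i₂.val + i₃.val + i₄.val)) • s₀
    + (-(-1 : 𝕜) ^ (i₁.val * (i₂.val + i₃.val + i₄.val) + i₂.val * (i₃.val + i₄.val))) • s₁
    + (-(-1 : 𝕜) ^ (i₁.val * (i₂.val + i₃.val + i₄.val) + i₄.val * (i₂.val + i₃.val))) • s₂
    + (-1 : 𝕜) ^ (i₁.val * (i₂.val + i₃.val + i₄.val) + i₄.val * i₃.val) • s₃
    + (-(-1 : 𝕜) ^ (i₁.val * (i₂.val + i₃.val + i₄.val))) • s₄

end IsRep3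

def IsCoboundaryOf (G : ZMod 2 → Submodule 𝕜 V) (br : V → V → V → V) (α β αi βi : V →ₗ[𝕜] V)
    (ρ : V → V → M →ₗ[𝕜] M) (f : V →ₗ[𝕜] M) (Θ : V → V → V → M) : Prop :=
  ∀ (i j k : ZMod 2), ∀ x ∈ G i, ∀ y ∈ G j, ∀ z ∈ G k,
    Θ x y z =
      f (br x y z) - ρ x y (f z) +
        (-1 : 𝕜) ^ (j.val * k.val) • ρ x (αi (β z)) (f (α (βi y))) -
        (-1 : 𝕜) ^ ((j.val + k.val) * i.val) • ρ y (αi (β z)) (f (α (βi x)))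

namespace IsCoboundaryOf

theorem apply_β_β_α (hΘ : IsCoboundaryOf G br α β αi βi ρ f Θ)
    (halg : Is3BiHomLieSuper 𝕜 G br α β) (hαi : ∀ x, αi (α x) = x) (hβi : ∀ x, βi (β x) = x)
    (hx : x ∈ G i) (hy : y ∈ G j) (hz : z ∈ G k) :
    Θ (β x) (β y) (α z) =
      f (br (β x) (β y) (α z)) - ρ (β x) (β y) (f (α z)) +
        (-1 : 𝕜) ^ (j.val * k.val) • ρ (β x) (β z) (f (α y)) -
        (-1 : 𝕜) ^ ((j.val + k.val) * i.val) • ρ (β y) (β z) (f (α x)) := by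
  rw [hΘ i j k _ (halg.β_even i x hx) _ (halg.β_even j y hy) _ (halg.α_even k z hz),
    ← halg.comm, hαi, hβi, hβi]

theorem mem (hΘ : IsCoboundaryOf G br α β αi βi ρ f Θ) (halg : Is3BiHomLieSuper 𝕜 G br α β)
    (hrep : IsRep3 𝕜 G br α β GM ρ αM βM)
    (hαi₁ : ∀ x, α (αi x) = x) (hαi₂ : ∀ x, αi (α x) = x)
    (hβi₁ : ∀ x, β (βi x) = x) (hβi₂ : ∀ x, βi (β x) = x) (hfG : ∀ i, ∀ x ∈ G i, f x ∈ GM i)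
    (hx : x ∈ G i) (hy : y ∈ G j) (hz : z ∈ G k) : Θ x y z ∈ GM (i + j + k) := by
  have hz' := halg.inv_mem hαi₂ hαi₁ halg.α_even (halg.β_even k z hz)
  have hαβi {l : ZMod 2} {t : V} (ht : t ∈ G l) : f (α (βi t)) ∈ GM l :=
    hfG l _ (halg.α_even l _ (halg.inv_mem hβi₂ hβi₁ halg.β_even ht))
  rw [hΘ i j k x hx y hy z hz]
  refine sub_mem (add_mem (sub_mem ?_ ?_) (Submodule.smul_mem _ _ ?_)) (Submodule.smul_mem _ _ ?_)
  · exact hfG _ _ (halg.br_grade i j k x hx y hy z hz)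
  · exact hrep.ρeven i j k x hx y hy _ (hfG k z hz)
  · exact add_right_comm i j k ▸ hrep.ρeven i k j x hx _ hz' _ (hαβi hy)
  · exact (by abel : j + k + i = i + j + k) ▸ hrep.ρeven j k i y hy _ hz' _ (hαβi hx)

theorem map_apply (hΘ : IsCoboundaryOf G br α β αi βi ρ f Θ)
    (hG : G 0 ⊔ G 1 = ⊤)
    (hαi₁ : ∀ x, α (αi x) = x) (hαi₂ : ∀ x, αi (α x) = x)
    (hβi₁ : ∀ x, β (βi x) = x) (hβi₂ : ∀ x, βi (β x) = x)
    (hadd₁ : ∀ x x' y z, Θ (x + x') y z = Θ x y z + Θ x' y z)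
    (hadd₂ : ∀ x y y' z, Θ x (y + y') z = Θ x y z + Θ x y' z)
    (hadd₃ : ∀ x y z z', Θ x y (z + z') = Θ x y z + Θ x y z')
    {γ : V →ₗ[𝕜] V} {γM : M →ₗ[𝕜] M} (hγG : ∀ i, ∀ x ∈ G i, γ x ∈ G i)
    (hγα : ∀ x, γ (α x) = α (γ x)) (hγβ : ∀ x, γ (β x) = β (γ x))
    (hγbr : ∀ x y z, γ (br x y z) = br (γ x) (γ y) (γ z))
    (hfγ : ∀ x, f (γ x) = γM (f x)) (hργ : ∀ u v m, γM (ρ u v m) = ρ (γ u) (γ v) (γM m))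
    (x y z : V) : γM (Θ x y z) = Θ (γ x) (γ y) (γ z) := by
  have hγαi (t : V) : γ (αi t) = αi (γ t) := by conv_rhs => rw [← hαi₁ t, hγα, hαi₂]
  have hγβi (t : V) : γ (βi t) = βi (γ t) := by conv_rhs => rw [← hβi₁ t, hγβ, hβi₂]
  refine eq_of_eq_on_homogeneous₃ (φ := fun x y z ↦ γM (Θ x y z))
    (ψ := fun x y z ↦ Θ (γ x) (γ y) (γ z)) hG (by simp [hadd₁]) (by simp [hadd₂]) (by simp [hadd₃])
    (by simp [hadd₁]) (by simp [hadd₂]) (by simp [hadd₃]) (fun i j k x hx y hy z hz ↦ ?_) x y z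
  rw [hΘ i j k x hx y hy z hz, hΘ i j k _ (hγG i x hx) _ (hγG j y hy) _ (hγG k z hz)]
  simp only [map_sub, map_add, map_smul, hργ, ← hfγ, hγbr, hγα, hγβ, hγαi, hγβi]

theorem skew₁ (hΘ : IsCoboundaryOf G br α β αi βi ρ f Θ) (halg : Is3BiHomLieSuper 𝕜 G br α β)
    (hrep : IsRep3 𝕜 G br α β GM ρ αM βM) (hαi : ∀ x, αi (α x) = x) (hβi : ∀ x, βi (β x) = x)
    (hadd₃ : ∀ x y z z', Θ x y (z + z') = Θ x y z + Θ x y z')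
    (hx : x ∈ G i) (hy : y ∈ G j) (z : V) :
    Θ (β x) (β y) (α z) = -((-1 : 𝕜) ^ (i.val * j.val)) • Θ (β y) (β x) (α z) := by
  refine eq_of_eq_on_homogeneous (φ := fun z ↦ Θ (β x) (β y) (α z))
    (ψ := fun z ↦ -((-1 : 𝕜) ^ (i.val * j.val)) • Θ (β y) (β x) (α z)) halg.sup_top
    (by simp [hadd₃]) (by simp [hadd₃]) (fun k z hz ↦ ?_) z
  rw [hΘ.apply_β_β_α halg hαi hβi hx hy hz, hΘ.apply_β_β_α halg hαi hβi hy hx hz]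
  have hbr := congrArg f (halg.skew₁ i j x hx y hy z)
  have hρ := LinearMap.congr_fun
    (hrep.ρskew i j (β x) (halg.β_even i x hx) (β y) (halg.β_even j y hy)) (f (α z))
  simp only [map_smul, LinearMap.smul_apply] at hbr hρ
  linear_combination (norm := match_scalars <;>
    rcases ZMod.two_cases i with rfl | rfl <;> rcases ZMod.two_cases j with rfl | rfl <;>
    rcases ZMod.two_cases k with rfl | rfl <;> norm_num [ZMod.val_one]) hbr - hρ

theorem skew₂ (hΘ : IsCoboundaryOf G br α β αi βi ρ f Θ) (halg : Is3BiHomLieSuper 𝕜 G br α β)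
    (hrep : IsRep3 𝕜 G br α β GM ρ αM βM) (hαi : ∀ x, αi (α x) = x) (hβi : ∀ x, βi (β x) = x)
    (hadd₁ : ∀ x x' y z, Θ (x + x') y z = Θ x y z + Θ x' y z)
    (hy : y ∈ G j) (hz : z ∈ G k) (x : V) :
    Θ (β x) (β y) (α z) = -((-1 : 𝕜) ^ (j.val * k.val)) • Θ (β x) (β z) (α y) := by
  refine eq_of_eq_on_homogeneous (φ := fun x ↦ Θ (β x) (β y) (α z))
    (ψ := fun x ↦ -((-1 : 𝕜) ^ (j.val * k.val)) • Θ (β x) (β z) (α y)) halg.sup_top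
    (by simp [hadd₁]) (by simp [hadd₁]) (fun i x hx ↦ ?_) x
  rw [hΘ.apply_β_β_α halg hαi hβi hx hy hz, hΘ.apply_β_β_α halg hαi hβi hx hz hy]
  have hbr := congrArg f (halg.skew₂ j k y hy z hz x)
  have hρ := LinearMap.congr_fun
    (hrep.ρskew j k (β y) (halg.β_even j y hy) (β z) (halg.β_even k z hz)) (f (α x))
  simp only [map_smul, LinearMap.smul_apply] at hbr hρ
  linear_combination (norm := match_scalars <;>
    rcases ZMod.two_cases i with rfl | rfl <;> rcases ZMod.two_cases j with rfl | rfl <;>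
    rcases ZMod.two_cases k with rfl | rfl <;> norm_num [ZMod.val_one])
    hbr - (-1 : 𝕜) ^ ((j.val + k.val) * i.val) • hρ

theorem apply_br_add_ρ_apply (hΘ : IsCoboundaryOf G br α β αi βi ρ f Θ)
    (halg : Is3BiHomLieSuper 𝕜 G br α β) (hαi₁ : ∀ x, α (αi x) = x)
    (hαi₂ : ∀ x, αi (α x) = x) (hβi : ∀ x, βi (β x) = x) (hfβ : ∀ x, f (β x) = βM (f x))
    (hx₁ : x₁ ∈ G i₁) (hx₂ : x₂ ∈ G i₂) (hx₃ : x₃ ∈ G i₃) (hx₄ : x₄ ∈ G i₄) (hx₅ : x₅ ∈ G i₅) :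
    Θ (β (β x₁)) (β (β x₂)) (br (β x₃) (β x₄) (α x₅)) +
        ρ (β (β x₁)) (β (β x₂)) (Θ (β x₃) (β x₄) (α x₅)) =
      f (br (β (β x₁)) (β (β x₂)) (br (β x₃) (β x₄) (α x₅))) +
      (-1 : 𝕜) ^ (i₂.val * (i₃ + i₄ + i₅).val) •
        ρ (β (β x₁)) (br (β (β (αi x₃))) (β (β (αi x₄))) (β x₅)) (βM (f (α x₂))) -
      (-1 : 𝕜) ^ ((i₂.val + (i₃ + i₄ + i₅).val) * i₁.val) •
        ρ (β (β x₂)) (br (β (β (αi x₃))) (β (β (αi x₄))) (β x₅)) (βM (f (α x₁))) -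
      ρ (β (β x₁)) (β (β x₂)) (ρ (β x₃) (β x₄) (f (α x₅))) +
      (-1 : 𝕜) ^ (i₄.val * i₅.val) • ρ (β (β x₁)) (β (β x₂)) (ρ (β x₃) (β x₅) (f (α x₄))) -
      (-1 : 𝕜) ^ ((i₄.val + i₅.val) * i₃.val) •
        ρ (β (β x₁)) (β (β x₂)) (ρ (β x₄) (β x₅) (f (α x₃))) := by
  have hβ := halg.β_even
  rw [hΘ _ _ _ _ (hβ _ _ (hβ _ _ hx₁)) _ (hβ _ _ (hβ _ _ hx₂)) _
      (halg.br_grade _ _ _ _ (hβ _ _ hx₃) _ (hβ _ _ hx₄) _ (halg.α_even _ _ hx₅)),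
    hΘ.apply_β_β_α halg hαi₂ hβi hx₃ hx₄ hx₅, halg.inv_β_br hαi₁ hαi₂, hβi, hβi, halg.comm,
    halg.comm, hfβ, hfβ]
  simp only [map_sub, map_add, map_smul]
  abel

theorem cocycle (hΘ : IsCoboundaryOf G br α β αi βi ρ f Θ)
    (halg : Is3BiHomLieSuper 𝕜 G br α β) (hrep : IsRep3 𝕜 G br α β GM ρ αM βM)
    (hαi₁ : ∀ x, α (αi x) = x) (hαi₂ : ∀ x, αi (α x) = x) (hβi : ∀ x, βi (β x) = x)
    (hfβ : ∀ x, f (β x) = βM (f x))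
    (hx₁ : x₁ ∈ G i₁) (hx₂ : x₂ ∈ G i₂) (hx₃ : x₃ ∈ G i₃) (hx₄ : x₄ ∈ G i₄) (hx₅ : x₅ ∈ G i₅) :
    Θ (β (β x₁)) (β (β x₂)) (br (β x₃) (β x₄) (α x₅)) +
      ρ (β (β x₁)) (β (β x₂)) (Θ (β x₃) (β x₄) (α x₅)) =
    (-1 : 𝕜) ^ ((i₄.val + i₅.val) * (i₁.val + i₂.val + i₃.val)) •
      (Θ (β (β x₄)) (β (β x₅)) (br (β x₁) (β x₂) (α x₃)) +
        ρ (β (β x₄)) (β (β x₅)) (Θ (β x₁) (β x₂) (α x₃))) -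
    (-1 : 𝕜) ^ ((i₃.val + i₅.val) * (i₁.val + i₂.val) + i₄.val * i₅.val) •
      (Θ (β (β x₃)) (β (β x₅)) (br (β x₁) (β x₂) (α x₄)) +
        ρ (β (β x₃)) (β (β x₅)) (Θ (β x₁) (β x₂) (α x₄))) +
    (-1 : 𝕜) ^ ((i₃.val + i₄.val) * (i₁.val + i₂.val)) •
      (Θ (β (β x₃)) (β (β x₄)) (br (β x₁) (β x₂) (α x₅)) +
        ρ (β (β x₃)) (β (β x₄)) (Θ (β x₁) (β x₂) (α x₅))) := by
  rw [hΘ.apply_br_add_ρ_apply halg hαi₁ hαi₂ hβi hfβ hx₁ hx₂ hx₃ hx₄ hx₅,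
    hΘ.apply_br_add_ρ_apply halg hαi₁ hαi₂ hβi hfβ hx₄ hx₅ hx₁ hx₂ hx₃,
    hΘ.apply_br_add_ρ_apply halg hαi₁ hαi₂ hβi hfβ hx₃ hx₅ hx₁ hx₂ hx₄,
    hΘ.apply_br_add_ρ_apply halg hαi₁ hαi₂ hβi hfβ hx₃ hx₄ hx₁ hx₂ hx₅]
  have hJ := congrArg f (halg.jacobi i₁ i₂ i₃ i₄ i₅ x₁ hx₁ x₂ hx₂ x₃ hx₃ x₄ hx₄ x₅ hx₅)
  have h₅ := hrep.rep₃_twisted halg hαi₁ hαi₂ hx₁ hx₂ hx₃ hx₄ (f (α x₅))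
  have h₄ := hrep.rep₃_twisted halg hαi₁ hαi₂ hx₁ hx₂ hx₃ hx₅ (f (α x₄))
  have h₃ := hrep.rep₃_twisted halg hαi₁ hαi₂ hx₁ hx₂ hx₄ hx₅ (f (α x₃))
  have h₂ := hrep.rep₄_twisted halg hαi₁ hαi₂ hx₁ hx₃ hx₄ hx₅ (f (α x₂))
  have h₁ := hrep.rep₄_twisted halg hαi₁ hαi₂ hx₂ hx₃ hx₄ hx₅ (f (α x₁))
  simp only [map_add, map_sub, map_smul] at hJ
  linear_combination (norm := match_scalars <;> first | ring1 |
    rcases ZMod.two_cases i₁ with rfl | rfl <;> rcases ZMod.two_cases i₂ with rfl | rfl <;>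
    rcases ZMod.two_cases i₃ with rfl | rfl <;> rcases ZMod.two_cases i₄ with rfl | rfl <;>
    rcases ZMod.two_cases i₅ with rfl | rfl <;> norm_num [ZMod.val_one, ZMod.val_ofNat])
    hJ - h₅ + (-1 : 𝕜) ^ (i₄.val * i₅.val) • h₄ - (-1 : 𝕜) ^ ((i₄.val + i₅.val) * i₃.val) • h₃ +
    (-1 : 𝕜) ^ (i₂.val * (i₃.val + i₄.val + i₅.val)) • h₂ -
    (-1 : 𝕜) ^ ((i₂.val + i₃.val + i₄.val + i₅.val) * i₁.val) • h₁

end IsCoboundaryOf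

end BiHom

theorem statement11_general {𝕜 V M : Type*} [Field 𝕜] [AddCommGroup V] [Module 𝕜 V]
    [AddCommGroup M] [Module 𝕜 M]
    (G : ZMod 2 → Submodule 𝕜 V) (br : V → V → V → V) (α β : V →ₗ[𝕜] V)
    (GM : ZMod 2 → Submodule 𝕜 M) (ρ : V → V → M →ₗ[𝕜] M) (αM βM : M →ₗ[𝕜] M)
    (halg : Is3BiHomLieSuper 𝕜 G br α β)
    (hrep : IsRep3 𝕜 G br α β GM ρ αM βM)
    (αi : V →ₗ[𝕜] V) (hαi₁ : ∀ x, α (αi x) = x) (hαi₂ : ∀ x, αi (α x) = x)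
    (βi : V →ₗ[𝕜] V) (hβi₁ : ∀ x, β (βi x) = x) (hβi₂ : ∀ x, βi (β x) = x)
    (f : V →ₗ[𝕜] M)
    (hfe : ∀ i, ∀ x ∈ G i, f x ∈ GM i)
    (hfα : ∀ x, f (α x) = αM (f x)) (hfβ : ∀ x, f (β x) = βM (f x))
    (Θ : V → V → V → M)
    (hadd₁ : ∀ x x' y z, Θ (x + x') y z = Θ x y z + Θ x' y z)
    (hsmul₁ : ∀ (c : 𝕜) x y z, Θ (c • x) y z = c • Θ x y z)
    (hadd₂ : ∀ x y y' z, Θ x (y + y') z = Θ x y z + Θ x y' z)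
    (hsmul₂ : ∀ (c : 𝕜) x y z, Θ x (c • y) z = c • Θ x y z)
    (hadd₃ : ∀ x y z z', Θ x y (z + z') = Θ x y z + Θ x y z')
    (hsmul₃ : ∀ (c : 𝕜) x y z, Θ x y (c • z) = c • Θ x y z)
    (hΘ : ∀ (i j k : ZMod 2), ∀ x ∈ G i, ∀ y ∈ G j, ∀ z ∈ G k,
      Θ x y z =
        f (br x y z) - ρ x y (f z) +
          (-1 : 𝕜) ^ (j.val * k.val) • ρ x (αi (β z)) (f (α (βi y))) -
          (-1 : 𝕜) ^ ((j.val + k.val) * i.val) • ρ y (αi (β z)) (f (α (βi x)))) :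
    Is3Cocycle 𝕜 G br α β GM ρ αM βM Θ := by
  have hΘ : IsCoboundaryOf G br α β αi βi ρ f Θ := hΘ
  refine ⟨hadd₁, hsmul₁, hadd₂, hsmul₂, hadd₃, hsmul₃,
    fun _ _ _ _ hx _ hy _ hz ↦ hΘ.mem halg hrep hαi₁ hαi₂ hβi₁ hβi₂ hfe hx hy hz, ?_, ?_,
    fun _ _ _ hx _ hy z ↦ hΘ.skew₁ halg hrep hαi₂ hβi₂ hadd₃ hx hy z,
    fun _ _ _ hy _ hz x ↦ hΘ.skew₂ halg hrep hαi₂ hβi₂ hadd₁ hy hz x,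
    fun _ _ _ _ _ _ hx₁ _ hx₂ _ hx₃ _ hx₄ _ hx₅ ↦
      hΘ.cocycle halg hrep hαi₁ hαi₂ hβi₂ hfβ hx₁ hx₂ hx₃ hx₄ hx₅⟩
  · exact hΘ.map_apply halg.sup_top hαi₁ hαi₂ hβi₁ hβi₂ hadd₁ hadd₂ hadd₃ halg.α_even
      (fun _ ↦ rfl) halg.comm halg.mult_α hfα
      (fun u v m ↦ (LinearMap.congr_fun (hrep.rep₁ u v) m).symm)
  · exact hΘ.map_apply halg.sup_top hαi₁ hαi₂ hβi₁ hβi₂ hadd₁ hadd₂ hadd₃ halg.β_even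
      (fun x ↦ (halg.comm x).symm) (fun _ ↦ rfl) halg.mult_β hfβ
      (fun u v m ↦ (LinearMap.congr_fun (hrep.rep₂ u v) m).symm)

/-- Coboundary-type 3-cocycle: if `f : g → M` is an even linear map intertwining the
structure maps (`f∘α = α_M∘f`, `f∘β = β_M∘f`), with `α, β` invertible, then any trilinear
map `Θ` which on homogeneous elements is given by
`θ_f(x,y,z) = f([x,y,z]) − ρ(x,y)f(z) + (−1)^{|y||z|}ρ(x,α⁻¹β z)f(αβ⁻¹ y)
  − (−1)^{(|y|+|z|)|x|}ρ(y,α⁻¹β z)f(αβ⁻¹ x)`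
is a 3-cocycle associated with `ρ`. -/
theorem statement11 {𝕜 V M : Type*} [Field 𝕜] [AddCommGroup V] [Module 𝕜 V]
    [AddCommGroup M] [Module 𝕜 M]
    (G : ZMod 2 → Submodule 𝕜 V) (br : V → V → V → V) (α β : V →ₗ[𝕜] V)
    (GM : ZMod 2 → Submodule 𝕜 M) (ρ : V → V → M →ₗ[𝕜] M) (αM βM : M →ₗ[𝕜] M)
    (halg : Is3BiHomLieSuper 𝕜 G br α β)
    (hrep : IsRep3 𝕜 G br α β GM ρ αM βM)
    (hαsurj : Function.Surjective α) (hβsurj : Function.Surjective β)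
    (αi : V →ₗ[𝕜] V) (hαi₁ : ∀ x, α (αi x) = x) (hαi₂ : ∀ x, αi (α x) = x)
    (βi : V →ₗ[𝕜] V) (hβi₁ : ∀ x, β (βi x) = x) (hβi₂ : ∀ x, βi (β x) = x)
    (f : V →ₗ[𝕜] M)
    (hfe : ∀ i, ∀ x ∈ G i, f x ∈ GM i)
    (hfα : ∀ x, f (α x) = αM (f x)) (hfβ : ∀ x, f (β x) = βM (f x))
    (Θ : V → V → V → M)
    (hadd₁ : ∀ x x' y z, Θ (x + x') y z = Θ x y z + Θ x' y z)
    (hsmul₁ : ∀ (c : 𝕜) x y z, Θ (c • x) y z = c • Θ x y z)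
    (hadd₂ : ∀ x y y' z, Θ x (y + y') z = Θ x y z + Θ x y' z)
    (hsmul₂ : ∀ (c : 𝕜) x y z, Θ x (c • y) z = c • Θ x y z)
    (hadd₃ : ∀ x y z z', Θ x y (z + z') = Θ x y z + Θ x y z')
    (hsmul₃ : ∀ (c : 𝕜) x y z, Θ x y (c • z) = c • Θ x y z)
    (hΘ : ∀ (i j k : ZMod 2), ∀ x ∈ G i, ∀ y ∈ G j, ∀ z ∈ G k,
      Θ x y z =
        f (br x y z) - ρ x y (f z) +
          (-1 : 𝕜) ^ (j.val * k.val) • ρ x (αi (β z)) (f (α (βi y))) -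
          (-1 : 𝕜) ^ ((j.val + k.val) * i.val) • ρ y (αi (β z)) (f (α (βi x)))) :
    Is3Cocycle 𝕜 G br α β GM ρ αM βM Θ :=
  statement11_general G br α β GM ρ αM βM halg hrep αi hαi₁ hαi₂ βi hβi₁ hβi₂ f hfe hfα hfβ Θ hadd₁
    hsmul₁ hadd₂ hsmul₂ hadd₃ hsmul₃ hΘ
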